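/- Let H^D be the hyperboloid of curvature C<0, p in H^D, and h'_1,...,h'_{K'} an orthogonal basis of H^⊥ ⊆ T_p H^D with [h'_i, h'_j] = -C δ_{ij}. Then for any x in H^D, min_{y in H^D_H} d(x,y) = |C|^{-1/2} · arccosh( sqrt(1 + Σ_{k=1}^{K'} [x, h'_k]^2) ). -/

import Mathlib

open Matrix BigOperators

/-- The Lorentz signature matrix J_D = diag(-1, 1, …, 1) over ℝ. -/
noncomputable def JmatR (D : ℕ) : Matrix (Fin (D + 1)) (Fin (D + 1)) ℝ :=
  Matrix.diagonal (fun i => if i = 0 then (-1 : ℝ) else 1)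

/-- Inverse hyperbolic cosine. -/
noncomputable def arcosh (t : ℝ) : ℝ := Real.log (t + Real.sqrt (t ^ 2 - 1))

lemma lorentz_form_eq (D : ℕ) (x y : Fin (D+1) → ℝ) :
    x ⬝ᵥ (JmatR D *ᵥ y) = ∑ i, (if i = 0 then (-1:ℝ) else 1) * (x i * y i) := by
  simp only [JmatR, dotProduct, Matrix.mulVec_diagonal]
  exact Finset.sum_congr rfl fun i _ => by ring

lemma lorentz_symm (D : ℕ) (x y : Fin (D+1) → ℝ) :
    x ⬝ᵥ (JmatR D *ᵥ y) = y ⬝ᵥ (JmatR D *ᵥ x) := by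
  rw [lorentz_form_eq, lorentz_form_eq]
  exact Finset.sum_congr rfl fun i _ => by ring

lemma lorentz_nonneg_of_zero (D : ℕ) (v : Fin (D+1) → ℝ) (hv : v 0 = 0) :
    0 ≤ v ⬝ᵥ (JmatR D *ᵥ v) := by
  rw [lorentz_form_eq]
  apply Finset.sum_nonneg
  intro i _
  by_cases h : i = 0
  · simp [h, hv]
  · simp only [h, if_false, one_mul]
    exact mul_self_nonneg _

lemma lorentz_revCS (D : ℕ) (u v : Fin (D+1) → ℝ)
    (huu : u ⬝ᵥ (JmatR D *ᵥ u) < 0) (hvv : v ⬝ᵥ (JmatR D *ᵥ v) < 0)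
    (hu0 : 0 < u 0) (hv0 : 0 < v 0) :
    u ⬝ᵥ (JmatR D *ᵥ v) ≤ -Real.sqrt ((u ⬝ᵥ (JmatR D *ᵥ u)) * (v ⬝ᵥ (JmatR D *ᵥ v))) := by
  have h0 : ((v 0) • u - (u 0) • v) 0 = 0 := by
    simp [mul_comm]
  have hw := lorentz_nonneg_of_zero D _ h0
  have hexp : ((v 0) • u - (u 0) • v) ⬝ᵥ (JmatR D *ᵥ ((v 0) • u - (u 0) • v)) =
      (v 0)^2 * (u ⬝ᵥ (JmatR D *ᵥ u)) - 2*(u 0)*(v 0)*(u ⬝ᵥ (JmatR D *ᵥ v))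
        + (u 0)^2 * (v ⬝ᵥ (JmatR D *ᵥ v)) := by
    rw [Matrix.mulVec_sub, Matrix.mulVec_smul, Matrix.mulVec_smul,
        sub_dotProduct, smul_dotProduct, smul_dotProduct,
        dotProduct_sub, dotProduct_sub, dotProduct_smul, dotProduct_smul,
        dotProduct_smul, dotProduct_smul, lorentz_symm D v u]
    simp only [smul_eq_mul]
    ring
  rw [hexp] at hw
  set A := u ⬝ᵥ (JmatR D *ᵥ u) with hA
  set Bq := v ⬝ᵥ (JmatR D *ᵥ v) with hB
  set E := u ⬝ᵥ (JmatR D *ᵥ v) with hE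
  have hα : (Real.sqrt (-A))^2 = -A := Real.sq_sqrt (by linarith)
  have hβ : (Real.sqrt (-Bq))^2 = -Bq := Real.sq_sqrt (by linarith)
  have hαβ : Real.sqrt (A*Bq) = Real.sqrt (-A) * Real.sqrt (-Bq) := by
    rw [show A*Bq = (Real.sqrt (-A) * Real.sqrt (-Bq))^2 by nlinarith]
    exact Real.sqrt_sq (by positivity)
  rw [hαβ]
  nlinarith [sq_nonneg (v 0 * Real.sqrt (-A) - u 0 * Real.sqrt (-Bq)),
    mul_pos hu0 hv0, Real.sqrt_nonneg (-A), Real.sqrt_nonneg (-Bq)]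

lemma lorentz_pos0 (D : ℕ) (u v : Fin (D+1) → ℝ)
    (huu : u ⬝ᵥ (JmatR D *ᵥ u) < 0) (hvv : v ⬝ᵥ (JmatR D *ᵥ v) < 0)
    (hu0 : 0 < u 0) (huv : u ⬝ᵥ (JmatR D *ᵥ v) < 0) : 0 < v 0 := by
  rcases lt_trichotomy (v 0) 0 with h | h | h
  · exfalso
    have hnvv : (-v) ⬝ᵥ (JmatR D *ᵥ (-v)) < 0 := by
      rwa [Matrix.mulVec_neg, dotProduct_neg, neg_dotProduct, neg_neg]
    have hnv0 : 0 < (-v) 0 := by simpa using neg_pos.mpr h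
    have hcs := lorentz_revCS D u (-v) huu hnvv hu0 hnv0
    have hsq : 0 < Real.sqrt ((u ⬝ᵥ (JmatR D *ᵥ u)) * ((-v) ⬝ᵥ (JmatR D *ᵥ (-v)))) :=
      Real.sqrt_pos.mpr (mul_pos_of_neg_of_neg huu hnvv)
    have : u ⬝ᵥ (JmatR D *ᵥ (-v)) = -(u ⬝ᵥ (JmatR D *ᵥ v)) := by
      rw [Matrix.mulVec_neg, dotProduct_neg]
    linarith [hcs, this ▸ hcs]
  · exact absurd (lorentz_nonneg_of_zero D v h) (not_le.mpr hvv)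
  · exact h

lemma my_sum_dotProduct {n : ℕ} {K : ℕ} (f : Fin K → (Fin n → ℝ)) (w : Fin n → ℝ) :
    (∑ k, f k) ⬝ᵥ w = ∑ k, (f k ⬝ᵥ w) := by
  simp only [dotProduct, Finset.sum_apply, Finset.sum_mul]
  exact Finset.sum_comm

lemma arcosh_mono {s t : ℝ} (hs : 1 ≤ s) (hst : s ≤ t) : arcosh s ≤ arcosh t := by
  unfold arcosh
  have h1 : (0:ℝ) < s + Real.sqrt (s^2 - 1) := by
    have := Real.sqrt_nonneg (s^2 - 1); linarith
  apply Real.log_le_log h1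
  have := Real.sqrt_le_sqrt (show s^2 - 1 ≤ t^2 - 1 by nlinarith)
  linarith

/-- On the hyperboloid of curvature C < 0, with h'_1,…,h'_{K'} an
orthogonal basis of H^⊥ ⊆ T_p H^D ([h'_i,h'_j] = -C δ_{ij}), for any x ∈ H^D,
min_{y ∈ H^D_H} d(x,y) = |C|^{-1/2} arccosh(√(1 + Σ_k [x,h'_k]²)). -/
theorem hyperbolic_projection_distance
    (D K' : ℕ) (C : ℝ) (hC : C < 0)
    (p : Fin (D + 1) → ℝ)
    (hp : p ⬝ᵥ (JmatR D *ᵥ p) = 1 / C ∧ 0 < p 0)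
    (h' : Fin K' → (Fin (D + 1) → ℝ))
    (htan : ∀ k, h' k ⬝ᵥ (JmatR D *ᵥ p) = 0)
    (horth : ∀ i j, h' i ⬝ᵥ (JmatR D *ᵥ h' j) = if i = j then -C else 0)
    (x : Fin (D + 1) → ℝ)
    (hx : x ⬝ᵥ (JmatR D *ᵥ x) = 1 / C ∧ 0 < x 0) :
    sInf {r : ℝ | ∃ y : Fin (D + 1) → ℝ,
        ((y ⬝ᵥ (JmatR D *ᵥ y) = 1 / C ∧ 0 < y 0) ∧
          ∀ k, y ⬝ᵥ (JmatR D *ᵥ h' k) = 0) ∧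
        r = (Real.sqrt |C|)⁻¹ * arcosh (C * (x ⬝ᵥ (JmatR D *ᵥ y)))}
    = (Real.sqrt |C|)⁻¹ *
        arcosh (Real.sqrt (1 + ∑ k, (x ⬝ᵥ (JmatR D *ᵥ h' k)) ^ 2)) := by
  obtain ⟨hxx, hx0⟩ := hx
  have hCne : C ≠ 0 := ne_of_lt hC
  set S : ℝ := 1 + ∑ k, (x ⬝ᵥ (JmatR D *ᵥ h' k)) ^ 2 with hSdef
  have hS1 : 1 ≤ S := by
    have : 0 ≤ ∑ k, (x ⬝ᵥ (JmatR D *ᵥ h' k)) ^ 2 :=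
      Finset.sum_nonneg fun k _ => sq_nonneg _
    rw [hSdef]; linarith
  have hS0 : (0:ℝ) < S := lt_of_lt_of_le one_pos hS1
  have hsS0 : 0 < Real.sqrt S := Real.sqrt_pos.mpr hS0
  have hsS2 : (Real.sqrt S)^2 = S := Real.sq_sqrt hS0.le
  set xp : Fin (D + 1) → ℝ :=
    x - ∑ k, ((x ⬝ᵥ (JmatR D *ᵥ h' k)) / (-C)) • h' k with hxp
  -- xp is orthogonal to each h' k
  have hperp : ∀ j, xp ⬝ᵥ (JmatR D *ᵥ h' j) = 0 := by
    intro j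
    rw [hxp, sub_dotProduct, my_sum_dotProduct]
    simp only [smul_dotProduct, smul_eq_mul, horth, mul_ite, mul_zero,
      Finset.sum_ite_eq', Finset.mem_univ, if_true]
    field_simp
    ring
  -- ⟨xp, x⟩ = S / C
  have hxpx : xp ⬝ᵥ (JmatR D *ᵥ x) = S / C := by
    rw [hxp, sub_dotProduct, my_sum_dotProduct]
    simp only [smul_dotProduct, smul_eq_mul]
    have hsum : ∀ k : Fin K', (x ⬝ᵥ (JmatR D *ᵥ h' k)) / (-C) * (h' k ⬝ᵥ (JmatR D *ᵥ x))
        = (x ⬝ᵥ (JmatR D *ᵥ h' k))^2 / (-C) := by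
      intro k; rw [lorentz_symm D (h' k) x]; ring
    rw [Finset.sum_congr rfl fun k _ => hsum k, ← Finset.sum_div, hxx, hSdef,
      div_neg, sub_neg_eq_add, ← add_div, add_comm]
  -- ⟨xp, xp⟩ = S / C
  have hxpxp : xp ⬝ᵥ (JmatR D *ᵥ xp) = S / C := by
    nth_rewrite 1 [hxp]
    rw [sub_dotProduct, my_sum_dotProduct]
    have hz : ∀ k : Fin K', (((x ⬝ᵥ (JmatR D *ᵥ h' k)) / (-C)) • h' k) ⬝ᵥ (JmatR D *ᵥ xp) = 0 := by
      intro k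
      rw [smul_dotProduct, smul_eq_mul, lorentz_symm D (h' k) xp, hperp, mul_zero]
    simp only [hz, Finset.sum_const_zero, sub_zero]
    rw [lorentz_symm D x xp]
    exact hxpx
  have hxpxp_neg : xp ⬝ᵥ (JmatR D *ᵥ xp) < 0 := by
    rw [hxpxp]; exact div_neg_of_pos_of_neg hS0 hC
  have hxx_neg : x ⬝ᵥ (JmatR D *ᵥ x) < 0 := by
    rw [hxx]; exact div_neg_of_pos_of_neg one_pos hC
  have hxxp_neg : x ⬝ᵥ (JmatR D *ᵥ xp) < 0 := by
    rw [lorentz_symm D x xp, hxpx]; exact div_neg_of_pos_of_neg hS0 hC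
  have hxp0 : 0 < xp 0 := lorentz_pos0 D x xp hxx_neg hxpxp_neg hx0 hxxp_neg
  -- the minimizer
  set y0 : Fin (D + 1) → ℝ := (Real.sqrt S)⁻¹ • xp with hy0
  have hy0y0 : y0 ⬝ᵥ (JmatR D *ᵥ y0) = 1 / C := by
    rw [hy0, Matrix.mulVec_smul, smul_dotProduct, dotProduct_smul,
      smul_eq_mul, smul_eq_mul, hxpxp]
    rw [show S / C = (Real.sqrt S)^2 / C by rw [hsS2]]
    field_simp
  have hy0k : ∀ k, y0 ⬝ᵥ (JmatR D *ᵥ h' k) = 0 := by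
    intro k
    rw [hy0, smul_dotProduct, smul_eq_mul, hperp, mul_zero]
  have hy00 : 0 < y0 0 := by
    have : y0 0 = (Real.sqrt S)⁻¹ * xp 0 := rfl
    rw [this]; positivity
  have hxy0 : C * (x ⬝ᵥ (JmatR D *ᵥ y0)) = Real.sqrt S := by
    rw [hy0, Matrix.mulVec_smul, dotProduct_smul, smul_eq_mul,
      lorentz_symm D x xp, hxpx]
    rw [show S / C = (Real.sqrt S)^2 / C by rw [hsS2]]
    field_simp
  -- the set and its least element
  apply IsLeast.csInf_eq
  constructor
  · exact ⟨y0, ⟨⟨hy0y0, hy00⟩, hy0k⟩, by rw [hxy0]⟩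
  · rintro r ⟨y, ⟨⟨hyy, hy0'⟩, hyk⟩, rfl⟩
    have hyy_neg : y ⬝ᵥ (JmatR D *ᵥ y) < 0 := by
      rw [hyy]; exact div_neg_of_pos_of_neg one_pos hC
    -- ⟨x, y⟩ = ⟨xp, y⟩
    have hby : x ⬝ᵥ (JmatR D *ᵥ y) = xp ⬝ᵥ (JmatR D *ᵥ y) := by
      rw [hxp, sub_dotProduct, my_sum_dotProduct]
      simp only [smul_dotProduct, smul_eq_mul]
      have : ∀ k : Fin K', h' k ⬝ᵥ (JmatR D *ᵥ y) = 0 := fun k =>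
        (lorentz_symm D (h' k) y).trans (hyk k)
      simp [this]
    have hrev := lorentz_revCS D xp y hxpxp_neg hyy_neg hxp0 hy0'
    rw [hxpxp, hyy] at hrev
    have hsqrt : Real.sqrt (S / C * (1 / C)) = Real.sqrt S / (-C) := by
      rw [show S / C * (1 / C) = (Real.sqrt S / (-C))^2 by
        rw [div_pow, hsS2, neg_sq]; ring]
      exact Real.sqrt_sq (div_nonneg (Real.sqrt_nonneg S) (by linarith))
    rw [hsqrt] at hrev
    have hkey : Real.sqrt S ≤ C * (x ⬝ᵥ (JmatR D *ᵥ y)) := by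
      rw [hby]
      have h2 := mul_le_mul_of_nonpos_left hrev hC.le
      have h3 : C * -(Real.sqrt S / (-C)) = Real.sqrt S := by
        rw [div_neg, neg_neg, mul_div_cancel₀ _ hCne]
      linarith
    have h1S : (1:ℝ) ≤ Real.sqrt S := by
      rw [show (1:ℝ) = Real.sqrt 1 by simp]
      exact Real.sqrt_le_sqrt hS1
    have hmono := arcosh_mono h1S hkey
    exact mul_le_mul_of_nonneg_left hmono (inv_nonneg.mpr (Real.sqrt_nonneg _))
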